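/- For all integers p ≥ 0 and m ≥ 2: c_m^{(p+2)} = c_{m−2}^{(p)}/(m(m−1)) + c_{m−1}^{(p)}·(2m+1)/(2m). -/

import Mathlib

open Finset

/-- The Pochhammer symbol `(f)_n = f (f+1) ⋯ (f+n-1)`, with `(f)_0 = 1`. -/
noncomputable def poch (f : ℝ) (n : ℕ) : ℝ := ∏ i ∈ Finset.range n, (f + (i : ℝ))

/-- The coefficients `c_m^{(p)} = (2m-p+2)_{2p-2m} / (2^{2p-2m} m! (p-m)!)` for `0 ≤ m ≤ p`,
and `c_m^{(p)} = 0` for `m > p`. -/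
noncomputable def cc (p m : ℕ) : ℝ :=
  if m ≤ p then
    poch (2 * (m : ℝ) - p + 2) (2 * (p - m)) /
      (2 ^ (2 * (p - m)) * (m.factorial : ℝ) * ((p - m).factorial : ℝ))
  else 0

lemma poch_succ (f : ℝ) (n : ℕ) : poch f (n + 1) = poch f n * (f + n) :=
  Finset.prod_range_succ _ _

lemma poch_succ' (f : ℝ) (n : ℕ) : poch f (n + 1) = f * poch (f + 1) n := by
  have := Finset.prod_range_succ' (fun i : ℕ => f + (i : ℝ)) n
  simp only [poch, this, Nat.cast_zero, add_zero, Nat.cast_add, Nat.cast_one]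
  rw [mul_comm]
  congr 1
  apply Finset.prod_congr rfl
  intro i _
  ring

lemma poch_zero (f : ℝ) : poch f 0 = 1 := Finset.prod_range_zero _

lemma poch_two (f : ℝ) : poch f 2 = f * (f + 1) := by
  rw [show (2:ℕ) = 1 + 1 from rfl, poch_succ, poch_succ, poch_zero]
  push_cast; ring

lemma poch_add_two (f : ℝ) (n : ℕ) :
    poch f (n + 2) = poch f n * (f + n) * (f + n + 1) := by
  rw [show n + 2 = (n + 1) + 1 from rfl, poch_succ, poch_succ]
  push_cast; ring

lemma poch_sub_two (f : ℝ) (n : ℕ) :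
    poch (f - 2) (n + 2) = (f - 2) * (f - 1) * poch f n := by
  rw [show n + 2 = (n + 1) + 1 from rfl, poch_succ', poch_succ']
  ring_nf

/-- Recurrence relation `c_m^{(p+2)} = c_{m-2}^{(p)}/(m(m-1)) + c_{m-1}^{(p)} (2m+1)/(2m)`. -/
theorem cc_recurrence (p m : ℕ) (hm : 2 ≤ m) :
    cc (p + 2) m =
      cc p (m - 2) / ((m : ℝ) * ((m : ℝ) - 1)) +
        cc p (m - 1) * (2 * (m : ℝ) + 1) / (2 * (m : ℝ)) := by
  obtain ⟨k, rfl⟩ : ∃ k, m = k + 2 := ⟨m - 2, by omega⟩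
  have h2 : k + 2 - 2 = k := by omega
  have h1 : k + 2 - 1 = k + 1 := by omega
  rw [h1, h2]
  rcases lt_trichotomy p k with h | rfl | h
  · -- p < k : everything is zero
    rw [cc, cc, cc, if_neg (by omega), if_neg (by omega), if_neg (by omega)]
    simp
  · -- m = p + 2
    rw [cc, cc, cc, if_pos (by omega), if_pos (by omega), if_neg (by omega)]
    simp only [Nat.sub_self, Nat.add_sub_cancel, mul_zero, poch_zero, pow_zero,
      Nat.factorial_zero, Nat.cast_one, mul_one, one_mul, zero_mul, zero_div, add_zero]
    have hF2 : (((p + 2).factorial : ℝ)) = ((p:ℝ) + 2) * ((p:ℝ) + 1) * (p.factorial : ℝ) := by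
      rw [Nat.factorial_succ, Nat.factorial_succ]; push_cast; ring
    have hp0 : (p.factorial : ℝ) ≠ 0 := Nat.cast_ne_zero.mpr p.factorial_ne_zero
    have hp1 : ((p : ℝ) + 1) ≠ 0 := by positivity
    have hp2 : ((p : ℝ) + 2) ≠ 0 := by positivity
    have hF2' : (((p + 2).factorial : ℝ)) ≠ 0 := Nat.cast_ne_zero.mpr (p + 2).factorial_ne_zero
    push_cast
    rw [show ((p:ℝ) + 2) - 1 = (p:ℝ) + 1 from by ring]
    field_simp
    rw [hF2]
    ring
  · rcases eq_or_lt_of_le (Nat.succ_le_of_lt h) with h' | h'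
    · -- m = p + 1
      obtain rfl : p = k + 1 := by omega
      rw [cc, cc, cc, if_pos (by omega), if_pos (by omega), if_pos (by omega)]
      rw [show k + 1 + 2 - (k + 2) = 1 from by omega, show k + 1 - k = 1 from by omega,
        show k + 1 - (k + 1) = 0 from by omega]
      simp only [mul_zero, poch_zero, pow_zero, Nat.factorial_zero, Nat.cast_one,
        mul_one, one_mul, Nat.factorial_one]
      rw [poch_two, poch_two]
      have hF2 : (((k + 2).factorial : ℝ)) = ((k:ℝ) + 2) * ((k:ℝ) + 1) * (k.factorial : ℝ) := by
        rw [Nat.factorial_succ, Nat.factorial_succ]; push_cast; ring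
      have hF1 : (((k + 1).factorial : ℝ)) = ((k:ℝ) + 1) * (k.factorial : ℝ) := by
        rw [Nat.factorial_succ]; push_cast; ring
      have hk0 : (k.factorial : ℝ) ≠ 0 := Nat.cast_ne_zero.mpr k.factorial_ne_zero
      have hk1 : ((k : ℝ) + 1) ≠ 0 := by positivity
      have hk2 : ((k : ℝ) + 2) ≠ 0 := by positivity
      have hF2' : (((k + 2).factorial : ℝ)) ≠ 0 := Nat.cast_ne_zero.mpr (k + 2).factorial_ne_zero
      have hF1' : (((k + 1).factorial : ℝ)) ≠ 0 := Nat.cast_ne_zero.mpr (k + 1).factorial_ne_zero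
      push_cast
      rw [show ((k:ℝ) + 2) - 1 = (k:ℝ) + 1 from by ring]
      field_simp
      rw [hF2, hF1]
      ring
    · -- m ≤ p : main case
      obtain ⟨j, rfl⟩ : ∃ j, p = k + 2 + j := ⟨p - (k + 2), by omega⟩
      rw [cc, cc, cc, if_pos (by omega), if_pos (by omega), if_pos (by omega)]
      rw [show k + 2 + j + 2 - (k + 2) = j + 2 from by omega,
        show k + 2 + j - k = j + 2 from by omega,
        show k + 2 + j - (k + 1) = j + 1 from by omega,
        show 2 * (j + 2) = 2 * j + 2 + 2 from by omega,
        show 2 * (j + 1) = 2 * j + 2 from by omega]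
      push_cast
      rw [show 2 * ((k:ℝ) + 2) - ((k:ℝ) + 2 + (j:ℝ) + 2) + 2 =
            2 * ((k:ℝ) + 1) - ((k:ℝ) + 2 + (j:ℝ)) + 2 from by ring,
        show 2 * (k:ℝ) - ((k:ℝ) + 2 + (j:ℝ)) + 2 =
            (2 * ((k:ℝ) + 1) - ((k:ℝ) + 2 + (j:ℝ)) + 2) - 2 from by ring,
        poch_add_two, poch_sub_two]
      generalize poch (2 * ((k:ℝ) + 1) - ((k:ℝ) + 2 + (j:ℝ)) + 2) (2 * j + 2) = P
      rw [show (2:ℝ) ^ (2 * j + 2 + 2) = 2 ^ (2 * j + 2) * 4 from by rw [pow_add]; norm_num]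
      set Q : ℝ := (2:ℝ) ^ (2 * j + 2) with hQdef
      have hQ : Q ≠ 0 := by rw [hQdef]; positivity
      have hFk2 : (((k + 2).factorial : ℝ)) = ((k:ℝ) + 2) * ((k:ℝ) + 1) * (k.factorial : ℝ) := by
        rw [Nat.factorial_succ, Nat.factorial_succ]; push_cast; ring
      have hFk1 : (((k + 1).factorial : ℝ)) = ((k:ℝ) + 1) * (k.factorial : ℝ) := by
        rw [Nat.factorial_succ]; push_cast; ring
      have hFj2 : (((j + 2).factorial : ℝ)) = ((j:ℝ) + 2) * ((j:ℝ) + 1) * (j.factorial : ℝ) := by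
        rw [Nat.factorial_succ, Nat.factorial_succ]; push_cast; ring
      have hFj1 : (((j + 1).factorial : ℝ)) = ((j:ℝ) + 1) * (j.factorial : ℝ) := by
        rw [Nat.factorial_succ]; push_cast; ring
      have hk0 : (k.factorial : ℝ) ≠ 0 := Nat.cast_ne_zero.mpr k.factorial_ne_zero
      have hj0 : (j.factorial : ℝ) ≠ 0 := Nat.cast_ne_zero.mpr j.factorial_ne_zero
      have hk1 : ((k : ℝ) + 1) ≠ 0 := by positivity
      have hk2 : ((k : ℝ) + 2) ≠ 0 := by positivity
      have hFk2' : (((k + 2).factorial : ℝ)) ≠ 0 := Nat.cast_ne_zero.mpr (k + 2).factorial_ne_zero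
      have hFk1' : (((k + 1).factorial : ℝ)) ≠ 0 := Nat.cast_ne_zero.mpr (k + 1).factorial_ne_zero
      have hFj2' : (((j + 2).factorial : ℝ)) ≠ 0 := Nat.cast_ne_zero.mpr (j + 2).factorial_ne_zero
      have hFj1' : (((j + 1).factorial : ℝ)) ≠ 0 := Nat.cast_ne_zero.mpr (j + 1).factorial_ne_zero
      rw [show ((k:ℝ) + 2) - 1 = (k:ℝ) + 1 from by ring]
      field_simp
      rw [hFk2, hFk1, hFj2, hFj1]
      push_cast
      ring
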